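/- Let n and k be nonnegative integers with n ≥ k+1, and let G = K_{n+k+3} + ((k+2)K₁ ∪ K₂) be the join of the complete graph on n+k+3 vertices with the disjoint union of k+2 isolated vertices and a single edge K₂. Then G is (n+k+3)-connected and its isolated toughness satisfies I(G) = (n+k+4)/(k+3). -/

import Mathlib

open SimpleGraph

variable {α β : Type*}

/-- The graph obtained from `G` by deleting the vertices in `S` (an induced subgraph
on the complement of `S`). -/
def SimpleGraph.delVerts (G : SimpleGraph α) (S : Set α) : SimpleGraph ↥(Sᶜ) :=
  G.induce Sᶜ

/-- The number of isolated vertices of a graph. -/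
noncomputable def isoCount (H : SimpleGraph α) : ℕ :=
  Nat.card {v : α // ∀ w, ¬ H.Adj v w}

/-- The number of connected components of a graph. -/
noncomputable def compCount (H : SimpleGraph α) : ℕ :=
  Nat.card H.ConnectedComponent

/-- A graph is `m`-connected if it has more than `m` vertices and stays connected
after deleting any fewer than `m` vertices. -/
def IsMConnected (G : SimpleGraph α) (m : ℕ) : Prop :=
  m < Nat.card α ∧ ∀ S : Set α, S.ncard < m → (G.delVerts S).Connected

/-- `G` has a spanning subgraph each of whose components is `K₂` or a cycle of length ≥ 3. -/
def HasK2CycleFactor (G : SimpleGraph α) : Prop :=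
  ∃ F : SimpleGraph α, F ≤ G ∧ ∀ c : F.ConnectedComponent,
    Nonempty ((F.induce c.supp) ≃g (⊤ : SimpleGraph (Fin 2))) ∨
    ∃ m : ℕ, 3 ≤ m ∧ Nonempty ((F.induce c.supp) ≃g cycleGraph m)

/-- `G` has a spanning subgraph each of whose components is `K₂` or an odd cycle of length ≥ 5. -/
def HasK2OddCycleFactor (G : SimpleGraph α) : Prop :=
  ∃ F : SimpleGraph α, F ≤ G ∧ ∀ c : F.ConnectedComponent,
    Nonempty ((F.induce c.supp) ≃g (⊤ : SimpleGraph (Fin 2))) ∨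
    ∃ m : ℕ, 5 ≤ m ∧ Odd m ∧ Nonempty ((F.induce c.supp) ≃g cycleGraph m)

/-- `B` is (the vertex set of) a block of `H`: a maximal set inducing a connected
subgraph with no cut vertex. -/
def IsBlock (H : SimpleGraph α) (B : Set α) : Prop :=
  ((H.induce B).Connected ∧ ∀ v ∈ B, B = {v} ∨ (H.induce (B \ {v})).Connected) ∧
  ∀ C : Set α, B ⊆ C →
    ((H.induce C).Connected ∧ ∀ v ∈ C, C = {v} ∨ (H.induce (C \ {v})).Connected) → B = C

/-- A triangular cactus: a connected graph each of whose blocks is a triangle;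
by convention the one-vertex graph `K₁` is also a triangular cactus. -/
def IsTriangularCactus (H : SimpleGraph α) : Prop :=
  H.Connected ∧ ((∃ v : α, ∀ w : α, w = v) ∨
    ∀ B : Set α, IsBlock H B → Nonempty ((H.induce B) ≃g (⊤ : SimpleGraph (Fin 3))))

/-- The number of connected components of `H` that are triangular cacti. -/
noncomputable def ctcCount (H : SimpleGraph α) : ℕ :=
  Nat.card {c : H.ConnectedComponent // IsTriangularCactus (H.induce c.supp)}

/-- The join of two graphs: their disjoint union together with all edges between them. -/
def SimpleGraph.join (G₁ : SimpleGraph α) (G₂ : SimpleGraph β) : SimpleGraph (α ⊕ β) where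
  Adj u v := match u, v with
    | Sum.inl a, Sum.inl b => G₁.Adj a b
    | Sum.inr a, Sum.inr b => G₂.Adj a b
    | Sum.inl _, Sum.inr _ => True
    | Sum.inr _, Sum.inl _ => True
  symm := ⟨fun u v => match u, v with
    | Sum.inl _, Sum.inl _ => fun h => G₁.adj_symm h
    | Sum.inr _, Sum.inr _ => fun h => G₂.adj_symm h
    | Sum.inl _, Sum.inr _ => fun _ => trivial
    | Sum.inr _, Sum.inl _ => fun _ => trivial⟩
  loopless := ⟨fun u => by cases u <;> simp⟩

/-- `G` is a `({K₂, C}, n)`-factor critical avoidable graph. -/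
def K2CycleFactorCriticalAvoidable (G : SimpleGraph α) (n : ℕ) : Prop :=
  ∀ W : Set α, W.ncard = n → ∀ u v : α, u ∉ W → v ∉ W → G.Adj u v →
    HasK2CycleFactor ((G.deleteEdges {s(u, v)}).delVerts W)

/-- `G` is a `({K₂, C_{2i+1} | i ≥ 2}, n)`-factor critical avoidable graph. -/
def K2OddCycleFactorCriticalAvoidable (G : SimpleGraph α) (n : ℕ) : Prop :=
  ∀ W : Set α, W.ncard = n → ∀ u v : α, u ∉ W → v ∉ W → G.Adj u v →
    HasK2OddCycleFactor ((G.deleteEdges {s(u, v)}).delVerts W)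

/-- The disjoint union of `m` triangles `K₃`. -/
def trianglesGraph (m : ℕ) : SimpleGraph (Fin m × Fin 3) where
  Adj p q := p.1 = q.1 ∧ p.2 ≠ q.2
  symm := ⟨fun _ _ h => ⟨h.1.symm, fun hh => h.2 hh.symm⟩⟩
  loopless := ⟨fun _ h => h.2 rfl⟩

/-- The graph `K_{n+k+3} + ((k+2)K₁ ∪ K₂)`. -/
def exampleGraph1 (n k : ℕ) :
    SimpleGraph (Fin (n + k + 3) ⊕ (Fin (k + 2) ⊕ Fin 2)) :=
  (⊤ : SimpleGraph (Fin (n + k + 3))).join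
    ((⊥ : SimpleGraph (Fin (k + 2))) ⊕g (⊤ : SimpleGraph (Fin 2)))

/-- The graph `K_{n+k+3} + ((k+2)K₃ ∪ K₂)`. -/
def exampleGraph2 (n k : ℕ) :
    SimpleGraph (Fin (n + k + 3) ⊕ ((Fin (k + 2) × Fin 3) ⊕ Fin 2)) :=
  (⊤ : SimpleGraph (Fin (n + k + 3))).join
    (trianglesGraph (k + 2) ⊕g (⊤ : SimpleGraph (Fin 2)))

/-- The graph `K_{n+k+2} + ((k+1)K₁ ∪ K₂)`. -/
def exampleGraph3 (n k : ℕ) :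
    SimpleGraph (Fin (n + k + 2) ⊕ (Fin (k + 1) ⊕ Fin 2)) :=
  (⊤ : SimpleGraph (Fin (n + k + 2))).join
    ((⊥ : SimpleGraph (Fin (k + 1))) ⊕g (⊤ : SimpleGraph (Fin 2)))

/-!
Deleting fewer than `n + k + 3` vertices leaves a vertex of the clique `K_{n+k+3}`, and it is
adjacent to every other remaining vertex. If `G - S` has two isolated vertices, then `S` contains
the whole clique, so the isolated vertices of `G - S` are those of `((k+2)K₁ ∪ K₂) - S'`, where
`S'` is the rest of `S`: at most `k + 2` of them, plus one end of the `K₂` when `S'` contains the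
other. Hence `|S| / i(G - S)` is at least `(n+k+3)/(k+2)` or `(n+k+4)/(k+3)`, and the latter is
the smaller; it is attained by the clique together with one end of the `K₂`.
-/

theorem Set.ncard_eq_ncard_preimage_inl_add_ncard_preimage_inr [Finite α] [Finite β]
    (S : Set (α ⊕ β)) : S.ncard = (Sum.inl ⁻¹' S).ncard + (Sum.inr ⁻¹' S).ncard := by
  conv_lhs => rw [← Set.image_preimage_inl_union_image_preimage_inr S]
  rw [Set.ncard_union_eq Set.disjoint_image_inl_image_inr,
    Set.ncard_image_of_injective _ Sum.inl_injective,
    Set.ncard_image_of_injective _ Sum.inr_injective]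

theorem Set.ncard_eq_card_add_ncard_preimage_inr [Finite α] [Finite β] {S : Set (α ⊕ β)}
    (hS : Set.range Sum.inl ⊆ S) : S.ncard = Nat.card α + (Sum.inr ⁻¹' S).ncard := by
  rw [Set.ncard_eq_ncard_preimage_inl_add_ncard_preimage_inr,
    Set.preimage_eq_univ_iff.2 hS, Set.ncard_univ]

namespace SimpleGraph

variable {γ : Type*}

def isolatedOutside (G : SimpleGraph α) (S : Set α) : Set α :=
  {v | v ∉ S ∧ ∀ w ∉ S, ¬ G.Adj v w}

theorem isoCount_delVerts (G : SimpleGraph α) (S : Set α) :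
    isoCount (G.delVerts S) = (G.isolatedOutside S).ncard := by
  rw [isoCount, ← Nat.card_coe_set_eq]
  exact Nat.card_congr
    { toFun := fun v => ⟨v.1.1, v.1.2, fun w hw hvw => v.2 ⟨w, hw⟩ hvw⟩
      invFun := fun v => ⟨⟨v.1, v.2.1⟩, fun w hvw => v.2.2 w.1 w.2 hvw⟩
      left_inv := fun _ => rfl
      right_inv := fun _ => rfl }

theorem connected_of_forall_adj {G : SimpleGraph α} (v : α) (h : ∀ w, v ≠ w → G.Adj v w) :
    G.Connected := by
  have : Nonempty α := ⟨v⟩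
  have reach (w : α) : G.Reachable v w := by
    obtain rfl | hvw := eq_or_ne v w
    · rfl
    · exact (h w hvw).reachable
  exact ⟨fun u w => (reach u).symm.trans (reach w)⟩

theorem isolatedOutside_bot (S : Set α) : (⊥ : SimpleGraph α).isolatedOutside S = Sᶜ := by
  ext v; simp [isolatedOutside]

theorem mem_isolatedOutside_top {S : Set α} {v : α} :
    v ∈ (⊤ : SimpleGraph α).isolatedOutside S ↔ v ∉ S ∧ ∀ w ∉ S, w = v := by
  simp only [isolatedOutside, Set.mem_ofPred_eq, top_adj, not_not]
  exact and_congr_right fun _ => forall₂_congr fun _ _ => eq_comm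

theorem ncard_isolatedOutside_top_le_one (S : Set α) :
    ((⊤ : SimpleGraph α).isolatedOutside S).ncard ≤ 1 := by
  have hsub : ((⊤ : SimpleGraph α).isolatedOutside S).Subsingleton := fun u hu v hv =>
    ((mem_isolatedOutside_top.1 hv).2 u (mem_isolatedOutside_top.1 hu).1)
  exact (Set.ncard_le_one hsub.finite).2 hsub

theorem isolatedOutside_top_empty [Nontrivial α] : (⊤ : SimpleGraph α).isolatedOutside ∅ = ∅ := by
  ext v
  obtain ⟨w, hwv⟩ := exists_ne v
  simpa [mem_isolatedOutside_top] using ⟨w, hwv⟩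

theorem preimage_inl_isolatedOutside_sum (G : SimpleGraph α) (H : SimpleGraph β)
    (S : Set (α ⊕ β)) :
    Sum.inl ⁻¹' (G ⊕g H).isolatedOutside S = G.isolatedOutside (Sum.inl ⁻¹' S) := by
  ext v; simp [isolatedOutside, Sum.forall]

theorem preimage_inr_isolatedOutside_sum (G : SimpleGraph α) (H : SimpleGraph β)
    (S : Set (α ⊕ β)) :
    Sum.inr ⁻¹' (G ⊕g H).isolatedOutside S = H.isolatedOutside (Sum.inr ⁻¹' S) := by
  ext v; simp [isolatedOutside, Sum.forall]

theorem top_join_adj_inl (H : SimpleGraph β) (a : α) (w : α ⊕ β) :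
    ((⊤ : SimpleGraph α).join H).Adj (Sum.inl a) w ↔ Sum.inl a ≠ w := by
  cases w <;> simp [join]

theorem preimage_inl_isolatedOutside_join_of_range_inl_subset (G : SimpleGraph α)
    (H : SimpleGraph β) {S : Set (α ⊕ β)} (hS : Set.range Sum.inl ⊆ S) :
    Sum.inl ⁻¹' (G.join H).isolatedOutside S = ∅ := by
  ext a; simpa [isolatedOutside] using fun h => absurd (hS ⟨a, rfl⟩) h

theorem preimage_inr_isolatedOutside_join_of_range_inl_subset (G : SimpleGraph α)
    (H : SimpleGraph β) {S : Set (α ⊕ β)} (hS : Set.range Sum.inl ⊆ S) :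
    Sum.inr ⁻¹' (G.join H).isolatedOutside S = H.isolatedOutside (Sum.inr ⁻¹' S) := by
  ext b
  simp only [isolatedOutside, Set.mem_preimage, Set.mem_ofPred_eq, Sum.forall]
  refine and_congr_right fun _ => and_iff_right_of_imp fun _ a ha => absurd (hS ⟨a, rfl⟩) ha

theorem isMConnected_top_join [Finite α] [Finite β] [Nonempty β] (H : SimpleGraph β) :
    IsMConnected ((⊤ : SimpleGraph α).join H) (Nat.card α) := by
  refine ⟨by simp [Nat.card_sum, Nat.card_pos], fun S hS => ?_⟩
  obtain ⟨a, ha⟩ : ∃ a, Sum.inl a ∉ S := by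
    by_contra! h
    have := Set.ncard_le_ncard (Set.range_subset_iff.2 h)
    rw [Set.ncard_range_of_injective Sum.inl_injective] at this
    omega
  exact connected_of_forall_adj ⟨Sum.inl a, ha⟩ fun w hw =>
    (top_join_adj_inl H a w).2 (Subtype.coe_injective.ne hw)

theorem range_inl_subset_of_two_le_ncard_isolatedOutside (H : SimpleGraph β) {S : Set (α ⊕ β)}
    (h : 2 ≤ (((⊤ : SimpleGraph α).join H).isolatedOutside S).ncard) :
    Set.range Sum.inl ⊆ S := by
  rintro _ ⟨a, rfl⟩
  by_contra ha
  have hsub : ((⊤ : SimpleGraph α).join H).isolatedOutside S ⊆ {Sum.inl a} := fun v hv =>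
    by_contra fun hva => hv.2 _ ha (((top_join_adj_inl H a v).2 (Ne.symm hva)).symm)
  have := Set.ncard_le_ncard hsub
  rw [Set.ncard_singleton] at this
  omega

theorem ncard_isolatedOutside_join_of_range_inl_subset [Finite α] [Finite β]
    (G : SimpleGraph α) (H : SimpleGraph β) {S : Set (α ⊕ β)} (hS : Set.range Sum.inl ⊆ S) :
    ((G.join H).isolatedOutside S).ncard = (H.isolatedOutside (Sum.inr ⁻¹' S)).ncard := by
  rw [Set.ncard_eq_ncard_preimage_inl_add_ncard_preimage_inr,
    preimage_inl_isolatedOutside_join_of_range_inl_subset G H hS,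
    preimage_inr_isolatedOutside_join_of_range_inl_subset G H hS, Set.ncard_empty, zero_add]

theorem ncard_isolatedOutside_bot_sum_top_le [Finite β] [Finite γ] [Nontrivial γ]
    (S : Set (β ⊕ γ)) :
    (((⊥ : SimpleGraph β) ⊕g (⊤ : SimpleGraph γ)).isolatedOutside S).ncard ≤
      Nat.card β + min 1 S.ncard := by
  rw [Set.ncard_eq_ncard_preimage_inl_add_ncard_preimage_inr, preimage_inl_isolatedOutside_sum,
    preimage_inr_isolatedOutside_sum, isolatedOutside_bot]
  obtain rfl | hS := S.eq_empty_or_nonempty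
  · simp [isolatedOutside_top_empty]
  · have := Set.ncard_le_card (Sum.inl ⁻¹' S)ᶜ
    have := ncard_isolatedOutside_top_le_one (Sum.inr ⁻¹' S)
    have := (Set.ncard_pos (Set.toFinite S)).2 hS
    omega

theorem card_succ_mul_ncard_isolatedOutside_le [Finite α] [Finite β] [Finite γ] [Nontrivial γ]
    (hβα : Nat.card β ≤ Nat.card α) {S : Set (α ⊕ (β ⊕ γ))}
    (hS : 2 ≤ (((⊤ : SimpleGraph α).join
      ((⊥ : SimpleGraph β) ⊕g (⊤ : SimpleGraph γ))).isolatedOutside S).ncard) :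
    (Nat.card α + 1) * (((⊤ : SimpleGraph α).join
      ((⊥ : SimpleGraph β) ⊕g (⊤ : SimpleGraph γ))).isolatedOutside S).ncard ≤
      S.ncard * (Nat.card β + 1) := by
  have hS' := range_inl_subset_of_two_le_ncard_isolatedOutside _ hS
  rw [ncard_isolatedOutside_join_of_range_inl_subset _ _ hS',
    Set.ncard_eq_card_add_ncard_preimage_inr hS']
  have hiso := ncard_isolatedOutside_bot_sum_top_le (β := β) (γ := γ) (Sum.inr ⁻¹' S)
  obtain h0 | hpos := Nat.eq_zero_or_pos (Sum.inr ⁻¹' S).ncard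
  · rw [h0, min_eq_right zero_le_one, add_zero] at hiso
    rw [h0]
    nlinarith
  · rw [min_eq_left hpos] at hiso
    nlinarith

theorem ncard_isolatedOutside_top_join_bot_sum_top_fin_two [Finite α] [Finite β] :
    (((⊤ : SimpleGraph α).join ((⊥ : SimpleGraph β) ⊕g (⊤ : SimpleGraph (Fin 2)))).isolatedOutside
      (Set.range Sum.inl ∪ {Sum.inr (Sum.inr 0)})).ncard = Nat.card β + 1 := by
  have hpre : Sum.inr ⁻¹' (Set.range (Sum.inl : α → α ⊕ (β ⊕ Fin 2)) ∪ {Sum.inr (Sum.inr 0)}) =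
      ({Sum.inr 0} : Set (β ⊕ Fin 2)) := by
    ext; simp
  rw [ncard_isolatedOutside_join_of_range_inl_subset _ _ Set.subset_union_left, hpre,
    Set.ncard_eq_ncard_preimage_inl_add_ncard_preimage_inr, preimage_inl_isolatedOutside_sum,
    preimage_inr_isolatedOutside_sum, isolatedOutside_bot]
  have h1 : (⊤ : SimpleGraph (Fin 2)).isolatedOutside {0} = {1} := by
    ext v
    simp only [mem_isolatedOutside_top, Set.mem_singleton_iff]
    exact ⟨fun h => (h.2 1 (by decide)).symm, by rintro rfl; exact ⟨by decide, fun w hw => by omega⟩⟩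
  have hinl : Sum.inl ⁻¹' ({Sum.inr 0} : Set (β ⊕ Fin 2)) = ∅ := by ext; simp
  have hinr : Sum.inr ⁻¹' ({Sum.inr 0} : Set (β ⊕ Fin 2)) = {0} := by ext; simp
  rw [hinl, hinr, h1, Set.compl_empty, Set.ncard_univ, Set.ncard_singleton]

end SimpleGraph

theorem statement11_general (n k : ℕ) :
    IsMConnected (exampleGraph1 n k) (n + k + 3) ∧
    (∀ S : Set (Fin (n + k + 3) ⊕ (Fin (k + 2) ⊕ Fin 2)),
      2 ≤ isoCount ((exampleGraph1 n k).delVerts S) →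
      ((n : ℝ) + k + 4) / ((k : ℝ) + 3) ≤
        (S.ncard : ℝ) / (isoCount ((exampleGraph1 n k).delVerts S) : ℝ)) ∧
    (∃ S : Set (Fin (n + k + 3) ⊕ (Fin (k + 2) ⊕ Fin 2)),
      2 ≤ isoCount ((exampleGraph1 n k).delVerts S) ∧
      (S.ncard : ℝ) / (isoCount ((exampleGraph1 n k).delVerts S) : ℝ) =
        ((n : ℝ) + k + 4) / ((k : ℝ) + 3)) := by
  simp only [isoCount_delVerts]
  unfold exampleGraph1
  refine ⟨by simpa using isMConnected_top_join (α := Fin (n + k + 3)) _, fun S hS => ?_, ?_⟩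
  · have key := card_succ_mul_ncard_isolatedOutside_le (by simp; omega) hS
    rw [Nat.card_fin, Nat.card_fin] at key
    rw [div_le_div_iff₀ (by positivity) (by exact_mod_cast hS.trans_lt' two_pos)]
    have := (Nat.cast_le (α := ℝ)).2 key
    push_cast at this
    linarith
  · refine ⟨Set.range Sum.inl ∪ {Sum.inr (Sum.inr 0)}, ?_⟩
    rw [ncard_isolatedOutside_top_join_bot_sum_top_fin_two,
      Set.ncard_union_eq (Set.disjoint_singleton_right.2 (by simp)),
      Set.ncard_range_of_injective Sum.inl_injective, Set.ncard_singleton, Nat.card_fin, Nat.card_fin]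
    refine ⟨by omega, ?_⟩
    push_cast
    ring

/-- For `n ≥ k+1`, the graph `G = K_{n+k+3} + ((k+2)K₁ ∪ K₂)` is
`(n+k+3)`-connected and its isolated toughness equals `(n+k+4)/(k+3)`
(the minimum defining `I(G)` equals that value: every eligible set gives a ratio `≥`
the value, and some eligible set attains it). -/
theorem statement11 (n k : ℕ) (hnk : k + 1 ≤ n) :
    IsMConnected (exampleGraph1 n k) (n + k + 3) ∧
    (∀ S : Set (Fin (n + k + 3) ⊕ (Fin (k + 2) ⊕ Fin 2)),
      2 ≤ isoCount ((exampleGraph1 n k).delVerts S) →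
      ((n : ℝ) + k + 4) / ((k : ℝ) + 3) ≤
        (S.ncard : ℝ) / (isoCount ((exampleGraph1 n k).delVerts S) : ℝ)) ∧
    (∃ S : Set (Fin (n + k + 3) ⊕ (Fin (k + 2) ⊕ Fin 2)),
      2 ≤ isoCount ((exampleGraph1 n k).delVerts S) ∧
      (S.ncard : ℝ) / (isoCount ((exampleGraph1 n k).delVerts S) : ℝ) =
        ((n : ℝ) + k + 4) / ((k : ℝ) + 3)) :=
  statement11_general n k
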